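/- Let a ≥ b ≥ 2, n = a+b+1, and I = i_1⋯i_z ∈ W_> (all parts ≥ 2, i_1 > i_p − s). Then D_I = i_1 − 2 − (i_p − s) + e_2(i_p − s, i_{p+1}, …, i_q, t) ≥ i_1 − 2 ≥ 0. If moreover q ≥ p+1, then: (1) if the modulus of R_I equals a (i.e. s = i_p), then i_1 ≥ 3 and D_I ≥ 2i_1 − 3; (2) otherwise i_1 ≥ 4 and D_I ≥ i_1 + 2. -/

import Mathlib

open scoped Classical
open MvPolynomial Finset

noncomputable section

/-- `σ⁺_I(a)`: the minimal partial sum of `I` that is at least `a`. -/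
def sigmaP (I : List ℕ) (a : ℝ) : ℝ :=
  sInf {x : ℝ | ∃ k ≤ I.length, x = ((I.take k).sum : ℝ) ∧ a ≤ x}

/-- `Θ⁺_I(a) = σ⁺_I(a) − a`. -/
def thetaP (I : List ℕ) (a : ℝ) : ℝ := sigmaP I a - a

/-- `σ⁻_I(a)`: the maximal partial sum of `I` that is at most `a`. -/
def sigmaM (I : List ℕ) (a : ℝ) : ℝ :=
  sSup {x : ℝ | ∃ k ≤ I.length, x = ((I.take k).sum : ℝ) ∧ x ≤ a}

/-- `Θ⁻_I(a) = a − σ⁻_I(a)`. -/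
def thetaM (I : List ℕ) (a : ℝ) : ℝ := a - sigmaM I a

/-- `w_I = i₁(i₂−1)⋯(i_z−1)`. -/
def wI : List ℕ → ℕ
  | [] => 1
  | i :: t => i * (t.map (· - 1)).prod

/-- `e_I`: the product of elementary symmetric polynomials indexed by the parts of `I`,
in `N` variables. -/
def eComp (N : ℕ) (I : List ℕ) : MvPolynomial (Fin N) ℝ :=
  (I.map fun i => MvPolynomial.esymm (Fin N) ℝ i).prod

/-- The chromatic symmetric function of a graph, truncated to `N` variables. -/
def csf {V : Type} [Fintype V] (G : SimpleGraph V) (N : ℕ) : MvPolynomial (Fin N) ℝ :=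
  ∑ κ : V → Fin N,
    if ∀ u v, G.Adj u v → κ u ≠ κ v then ∏ v, MvPolynomial.X (κ v) else 0

/-- Add a single edge `uv` to a graph. -/
def addE {V : Type} (G : SimpleGraph V) (u v : V) : SimpleGraph V :=
  G ⊔ SimpleGraph.fromRel fun x y => x = u ∧ y = v

/-- The list of consecutive pairs of a list of vertices. -/
def chainE (l : List ℕ) : List (ℕ × ℕ) := l.zip l.tail

/-- The simple graph on `Fin n` with the given list of edges. -/
def graphOfEdges (n : ℕ) (E : List (ℕ × ℕ)) : SimpleGraph (Fin n) :=
  SimpleGraph.fromRel fun u v => ((u : ℕ), (v : ℕ)) ∈ E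

/-- The path on `n` vertices. -/
def pathG (n : ℕ) : SimpleGraph (Fin n) := graphOfEdges n (chainE (List.range n))

/-- The cycle on `n` vertices. -/
def cycleG (n : ℕ) : SimpleGraph (Fin n) :=
  graphOfEdges n (chainE (List.range n ++ [0]))

/-- The tadpole `C_a^l`: a cycle on `a` vertices with a path of `l` edges attached. -/
def tadpoleG (a l : ℕ) : SimpleGraph (Fin (a + l)) :=
  graphOfEdges (a + l)
    (chainE (List.range a ++ [0]) ++ chainE (0 :: (List.range l).map (· + a)))

/-- The theta graph `θ_{abc}`: two vertices (`0` and `a+b+c-2`) joined by three internally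
disjoint paths of lengths `a`, `b`, `c`. -/
def thetaG (a b c : ℕ) : SimpleGraph (Fin (a + b + c - 1)) :=
  graphOfEdges (a + b + c - 1)
    (chainE (0 :: ((List.range (a - 1)).map (· + 1) ++ [a + b + c - 2])) ++
     chainE (0 :: ((List.range (b - 1)).map (· + a) ++ [a + b + c - 2])) ++
     chainE (0 :: ((List.range (c - 1)).map (· + (a + b - 1)) ++ [a + b + c - 2])))

/-- The index `p` defined by `m = i₁ + ⋯ + i_{p-1} + s` with `1 ≤ s ≤ i_p`:
the least `k` with `i₁ + ⋯ + i_k ≥ m`. -/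
def pIdx (I : List ℕ) (m : ℕ) : ℕ := sInf {k | m ≤ (I.take k).sum}

/-- The number `s` defined by `m = i₁ + ⋯ + i_{p-1} + s` with `1 ≤ s ≤ i_p`. -/
def sVal (I : List ℕ) (m : ℕ) : ℕ := m - (I.take (pIdx I m - 1)).sum

/-- The index `q` defined by `m = i₂ + ⋯ + i_q + t` with `1 ≤ t ≤ i_{q+1}`
(convention `i_{z+1} = i₁`). -/
def qIdx (I : List ℕ) (m : ℕ) : ℕ := sInf {k | m ≤ ((I.tail ++ I.take 1).take k).sum}

/-- The number `t` defined by `m = i₂ + ⋯ + i_q + t` with `1 ≤ t ≤ i_{q+1}`. -/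
def tVal (I : List ℕ) (m : ℕ) : ℕ := m - ((I.tail ++ I.take 1).take (qIdx I m - 1)).sum

/-- The part `i_p`. -/
def ipPart (I : List ℕ) (m : ℕ) : ℕ := I.getD (pIdx I m - 1) 0

/-- The second elementary symmetric polynomial evaluated on a list. -/
def e2 : List ℕ → ℤ
  | [] => 0
  | x :: t => (x : ℤ) * t.sum + e2 t

/-- The cycle-chord coefficient `Δ_I(m)`. -/
def DeltaI (I : List ℕ) (m : ℕ) : ℤ :=
  if (I.headI : ℤ) ≤ (ipPart I m : ℤ) - sVal I m then
    (sVal I m : ℤ) * ((ipPart I m : ℤ) - sVal I m - I.headI)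
  else
    e2 ((ipPart I m - sVal I m) ::
        ((I.drop (pIdx I m)).take (qIdx I m - pIdx I m) ++ [tVal I m]))

/-- The length of the prefix `P` in the decomposition `I = PQ`, where `Q` is the shortest
suffix of `I` with `|Q| ≥ a`. -/
def kPhi (a : ℕ) (I : List ℕ) : ℕ := sSup {j | j ≤ I.length ∧ a ≤ (I.drop j).sum}

/-- The transformation `φ`: writing `I = PQ` with `Q` the shortest suffix of modulus `≥ a`,
`φ(I) = I` if `Q = I`, and otherwise `φ(I) = i₁ · reverse(P∖i₁) · Q`. -/
def phi (a : ℕ) (I : List ℕ) : List ℕ :=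
  if kPhi a I = 0 then I
  else I.take 1 ++ ((I.drop 1).take (kPhi a I - 1)).reverse ++ I.drop (kPhi a I)

/-- The starting position of the longest suffix `R_I` of `I` of modulus `≤ a`. -/
def rIdx (a : ℕ) (I : List ℕ) : ℕ := sInf {j | (I.drop j).sum ≤ a}

/-- The partial reversal `ψ(I) = reverse(L_I) R_I`, where `R_I` is the longest suffix of `I`
of modulus `≤ a` and `L_I` is the complementary prefix. -/
def psi (a : ℕ) (I : List ℕ) : List ℕ :=
  (I.take (rIdx a I)).reverse ++ I.drop (rIdx a I)

/-- The clock coefficient `D_I = Θ⁺_I(2) − Θ⁻_{reverse(φ(I))}(a) + Δ_I(b+1)`. -/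
def DI (a b : ℕ) (I : List ℕ) : ℝ :=
  thetaP I 2 - thetaM (phi a I).reverse a + (DeltaI I (b + 1) : ℝ)

end

/-!
Every term of `D_I` is read off from partial sums of `I`. As `i₁ ≥ 2` is the first partial sum,
`Θ⁺_I(2) = i₁ − 2`. The map `φ` only reorders parts lying in front of a suffix whose sum already
reaches `a`, so the partial sums of `reverse φ(I)` that are at most `a` are exactly the suffix
sums of `I` that are at most `a`; the largest of them is `i_{p+1} + ⋯ + i_z = a − (i_p − s)`,
whence `Θ⁻ = i_p − s`, and `i₁ > i_p − s` selects the `e₂` branch of `Δ_I(b+1)`. When `q > p`,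
comparing `b + 1 = i₁ + ⋯ + i_{p−1} + s = i₂ + ⋯ + i_q + t` gives
`(i_p − s) + i_{p+1} + ⋯ + i_q + t = i₁`, and the bounds follow from elementary estimates of
`e₂` on a list of positive integers with at least two entries.
-/
lemma List.sum_drop_le_sum_drop {l : List ℕ} {i j : ℕ} (h : i ≤ j) :
    (l.drop j).sum ≤ (l.drop i).sum :=
  (l.drop_sublist_drop_left h).sum_le_sum fun _ _ => Nat.zero_le _

lemma sigmaP_cons_of_le {i a : ℕ} (t : List ℕ) (ha : 0 < a) (hai : a ≤ i) :
    sigmaP (i :: t) a = i := by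
  refine IsLeast.csInf_eq ⟨⟨1, by simp, by simp, by exact_mod_cast hai⟩, ?_⟩
  rintro x ⟨_ | k, -, rfl, hax⟩
  · simp only [List.take_zero, List.sum_nil, CharP.cast_eq_zero, Nat.cast_nonpos] at hax
    omega
  · exact_mod_cast (show i ≤ ((i :: t).take (k + 1)).sum by simp)

lemma thetaP_cons_of_le {i a : ℕ} (t : List ℕ) (ha : 0 < a) (hai : a ≤ i) :
    thetaP (i :: t) a = i - a := by
  rw [thetaP, sigmaP_cons_of_le t ha hai]

def partialSumsLE (J : List ℕ) (a : ℕ) : Set ℕ :=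
  {v | ∃ k ≤ J.length, (J.take k).sum = v ∧ v ≤ a}

lemma sigmaM_eq_of_isGreatest {J : List ℕ} {a v : ℕ} (h : IsGreatest (partialSumsLE J a) v) :
    sigmaM J a = v := by
  refine IsGreatest.csSup_eq ⟨?_, ?_⟩
  · obtain ⟨k, hk, hkv, hva⟩ := h.1
    exact ⟨k, hk, by rw [hkv], by exact_mod_cast hva⟩
  · rintro x ⟨k, hk, rfl, hxa⟩
    exact_mod_cast h.2 ⟨k, hk, rfl, by exact_mod_cast hxa⟩

lemma mem_partialSumsLE_reverse {l : List ℕ} {a v : ℕ} :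
    v ∈ partialSumsLE l.reverse a ↔ ∃ j ≤ l.length, (l.drop j).sum = v ∧ v ≤ a := by
  simp only [partialSumsLE, Set.mem_ofPred_eq, List.length_reverse, List.take_reverse,
    List.sum_reverse]
  constructor
  · rintro ⟨k, hk, h⟩
    exact ⟨l.length - k, by omega, h⟩
  · rintro ⟨j, hj, h⟩
    exact ⟨l.length - j, by omega, by rwa [Nat.sub_sub_self hj]⟩

lemma partialSumsLE_reverse_drop_append {l R : List ℕ} {k a : ℕ} (hR : ∀ r ∈ R, 0 < r)
    (hk : k ≤ l.length) (ha : a ≤ (l.drop k).sum) :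
    partialSumsLE ((l.drop k).reverse ++ R) a = partialSumsLE l.reverse a := by
  ext v
  rw [mem_partialSumsLE_reverse]
  constructor
  · rintro ⟨i, hi', hiv, hva⟩
    by_cases hi : i ≤ (l.drop k).length
    · rw [List.take_append_of_le_length (by simpa using hi), List.take_reverse, List.sum_reverse,
        List.drop_drop] at hiv
      exact ⟨k + ((l.drop k).length - i), by simp at hi ⊢; omega, hiv, hva⟩
    · have hpos : 0 < (R.take (i - (l.drop k).reverse.length)).sum :=
        List.sum_pos _ (fun r hr => hR r (List.mem_of_mem_take hr))
          (List.ne_nil_of_length_pos (by simp at hi hi' ⊢; omega))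
      rw [List.take_append, List.take_of_length_le (by simp at hi ⊢; omega), List.sum_append,
        List.sum_reverse] at hiv
      omega
  · rintro ⟨j, hj, rfl, hva⟩
    by_cases hkj : k ≤ j
    · refine ⟨l.length - j, by simp; omega, ?_, hva⟩
      rw [List.take_append_of_le_length (by simp; omega), List.take_reverse, List.sum_reverse,
        List.drop_drop]
      congr 2
      simp
      omega
    · have hkj' := List.sum_drop_le_sum_drop (l := l) (le_of_not_ge hkj)
      refine ⟨(l.drop k).length, by simp, ?_, hva⟩
      rw [List.take_append_of_le_length (by simp), List.take_of_length_le (by simp),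
        List.sum_reverse]
      omega

lemma kPhi_spec {a : ℕ} {l : List ℕ} (h : 0 < kPhi a l) :
    kPhi a l ≤ l.length ∧ a ≤ (l.drop (kPhi a l)).sum := by
  have hne : {j | j ≤ l.length ∧ a ≤ (l.drop j).sum}.Nonempty := by
    by_contra h'
    rw [Set.not_nonempty_iff_eq_empty] at h'
    simp [kPhi, h'] at h
  exact Nat.sSup_mem hne ⟨l.length, fun j hj => hj.1⟩

lemma partialSumsLE_reverse_phi {a : ℕ} {l : List ℕ} (hl : ∀ i ∈ l, 0 < i) :
    partialSumsLE (phi a l).reverse a = partialSumsLE l.reverse a := by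
  rcases Nat.eq_zero_or_pos (kPhi a l) with h | h
  · simp [phi, h]
  · have hrev : (phi a l).reverse
        = (l.drop (kPhi a l)).reverse ++ ((l.drop 1).take (kPhi a l - 1) ++ l.take 1) := by
      rcases l with _ | ⟨i, l⟩ <;> simp [phi, h.ne']
    rw [hrev]
    refine partialSumsLE_reverse_drop_append (fun r hr => hl r ?_) (kPhi_spec h).1
      (kPhi_spec h).2
    rcases List.mem_append.1 hr with hr | hr
    · exact List.mem_of_mem_drop (List.mem_of_mem_take hr)
    · exact List.mem_of_mem_take hr

lemma isGreatest_partialSumsLE_reverse {l : List ℕ} {a r : ℕ} (hle : (l.drop r).sum ≤ a)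
    (hlt : a < (l.drop (r - 1)).sum) :
    IsGreatest (partialSumsLE l.reverse a) (l.drop r).sum := by
  have hr : r ≤ l.length := by
    by_contra h
    rw [List.drop_eq_nil_of_le (by omega)] at hlt
    simp at hlt
  refine ⟨mem_partialSumsLE_reverse.2 ⟨r, hr, rfl, hle⟩, fun v hv => ?_⟩
  obtain ⟨j, -, rfl, hja⟩ := mem_partialSumsLE_reverse.1 hv
  have hrj : r ≤ j := by
    by_contra h
    have := List.sum_drop_le_sum_drop (l := l) (show j ≤ r - 1 by omega)
    omega
  exact List.sum_drop_le_sum_drop hrj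

lemma thetaM_reverse_phi {l : List ℕ} {a r : ℕ} (hl : ∀ i ∈ l, 0 < i)
    (hle : (l.drop r).sum ≤ a) (hlt : a < (l.drop (r - 1)).sum) :
    thetaM (phi a l).reverse a = a - (l.drop r).sum := by
  rw [thetaM, sigmaM_eq_of_isGreatest
    (partialSumsLE_reverse_phi hl ▸ isGreatest_partialSumsLE_reverse hle hlt)]

section PartIndex

variable {l : List ℕ} {m : ℕ}

lemma le_sum_take_pIdx (hm : m ≤ l.sum) : m ≤ (l.take (pIdx l m)).sum :=
  Nat.sInf_mem (s := {k | m ≤ (l.take k).sum}) ⟨l.length, by simpa using hm⟩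

lemma pIdx_le_length (hm : m ≤ l.sum) : pIdx l m ≤ l.length :=
  Nat.sInf_le (show l.length ∈ {k | m ≤ (l.take k).sum} by simpa using hm)

lemma pIdx_pos (h0 : 0 < m) (hm : m ≤ l.sum) : 0 < pIdx l m := by
  by_contra h
  have := le_sum_take_pIdx hm
  simp_all

lemma sum_take_pIdx_sub_one_lt (h0 : 0 < m) (hm : m ≤ l.sum) :
    (l.take (pIdx l m - 1)).sum < m := by
  by_contra h
  have : pIdx l m ≤ pIdx l m - 1 :=
    Nat.sInf_le (show pIdx l m - 1 ∈ {k | m ≤ (l.take k).sum} from not_lt.1 h)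
  have := pIdx_pos h0 hm
  omega

lemma sum_take_pIdx_eq (h0 : 0 < m) (hm : m ≤ l.sum) :
    (l.take (pIdx l m)).sum = (l.take (pIdx l m - 1)).sum + ipPart l m := by
  have hp := pIdx_pos h0 hm
  have hlt : pIdx l m - 1 < l.length := by have := pIdx_le_length hm; omega
  rw [ipPart, List.getD_eq_getElem _ _ hlt, ← List.sum_take_succ, Nat.sub_add_cancel hp]

lemma sVal_add_sum_take (h0 : 0 < m) (hm : m ≤ l.sum) :
    sVal l m + (l.take (pIdx l m - 1)).sum = m := by
  have := sum_take_pIdx_sub_one_lt h0 hm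
  rw [sVal]
  omega

lemma sVal_pos (h0 : 0 < m) (hm : m ≤ l.sum) : 0 < sVal l m := by
  have := sVal_add_sum_take h0 hm
  have := sum_take_pIdx_sub_one_lt h0 hm
  omega

lemma sVal_le_ipPart (h0 : 0 < m) (hm : m ≤ l.sum) : sVal l m ≤ ipPart l m := by
  have := sVal_add_sum_take h0 hm
  have := sum_take_pIdx_eq h0 hm
  have := le_sum_take_pIdx hm
  omega

end PartIndex

lemma two_le_sum_take_drop {l : List ℕ} (hl : ∀ i ∈ l, 2 ≤ i) {j k : ℕ} (hj : j < l.length)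
    (hk : 0 < k) : 2 ≤ ((l.drop j).take k).sum := by
  obtain ⟨y, hy⟩ := List.exists_mem_of_ne_nil _
    (List.ne_nil_of_length_pos (by simp; omega) : (l.drop j).take k ≠ [])
  exact (hl y (List.mem_of_mem_drop (List.mem_of_mem_take hy))).trans (List.le_sum_of_mem hy)

/-- The list `(i_{p+1}, …, i_q, t)` that follows `i_p − s` in the `e₂` of `Δ_I(m)`. -/
noncomputable def clockTail (l : List ℕ) (m : ℕ) : List ℕ :=
  (l.drop (pIdx l m)).take (qIdx l m - pIdx l m) ++ [tVal l m]

section ClockTail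

variable {i m : ℕ} {tl : List ℕ}

lemma qIdx_cons : qIdx (i :: tl) m = pIdx (tl ++ [i]) m := rfl

lemma tVal_cons : tVal (i :: tl) m = sVal (tl ++ [i]) m := rfl

lemma qIdx_le_length (hm : m ≤ (i :: tl).sum) : qIdx (i :: tl) m ≤ (i :: tl).length := by
  simpa [qIdx_cons] using
    pIdx_le_length (l := tl ++ [i]) (by simpa [add_comm] using hm)

lemma tVal_pos (h0 : 0 < m) (hm : m ≤ (i :: tl).sum) : 0 < tVal (i :: tl) m :=
  tVal_cons ▸ sVal_pos (l := tl ++ [i]) h0 (by simpa [add_comm] using hm)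

lemma sum_clockTail_pos (h0 : 0 < m) (hm : m ≤ (i :: tl).sum) :
    0 < (clockTail (i :: tl) m).sum := by
  rw [clockTail, List.sum_append, List.sum_singleton]
  exact Nat.add_pos_right _ (tVal_pos h0 hm)

lemma pos_of_mem_clockTail (hW : ∀ j ∈ i :: tl, 2 ≤ j) (h0 : 0 < m)
    (hm : m ≤ (i :: tl).sum) : ∀ y ∈ clockTail (i :: tl) m, 0 < y := by
  intro y hy
  rcases List.mem_append.1 hy with hy | hy
  · exact (hW y (List.mem_of_mem_drop (List.mem_of_mem_take hy))).trans_lt' two_pos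
  · exact List.mem_singleton.1 hy ▸ tVal_pos h0 hm

lemma two_le_length_clockTail (hm : m ≤ (i :: tl).sum)
    (hpq : pIdx (i :: tl) m + 1 ≤ qIdx (i :: tl) m) : 2 ≤ (clockTail (i :: tl) m).length := by
  have := qIdx_le_length hm
  simp only [clockTail, List.length_append, List.length_take, List.length_drop,
    List.length_singleton] at this ⊢
  omega

lemma three_le_sum_clockTail (hW : ∀ j ∈ i :: tl, 2 ≤ j) (h0 : 0 < m) (hm : m ≤ (i :: tl).sum)
    (hpq : pIdx (i :: tl) m + 1 ≤ qIdx (i :: tl) m) : 3 ≤ (clockTail (i :: tl) m).sum := by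
  have := qIdx_le_length hm
  have := two_le_sum_take_drop hW (j := pIdx (i :: tl) m)
    (k := qIdx (i :: tl) m - pIdx (i :: tl) m) (by omega) (by omega)
  have := tVal_pos h0 hm
  rw [clockTail, List.sum_append, List.sum_singleton]
  omega

/-- The two decompositions `m = i₁ + ⋯ + i_{p−1} + s = i₂ + ⋯ + i_q + t` differ by `i₁`. -/
lemma ipPart_sub_sVal_add_sum_clockTail (h0 : 0 < m) (hm : m ≤ (i :: tl).sum)
    (hpq : pIdx (i :: tl) m + 1 ≤ qIdx (i :: tl) m) :
    ipPart (i :: tl) m - sVal (i :: tl) m + (clockTail (i :: tl) m).sum = i := by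
  rw [clockTail, qIdx_cons, tVal_cons] at *
  have hm' : m ≤ (tl ++ [i]).sum := by simpa [add_comm] using hm
  have hq0 := pIdx_pos h0 hm'
  have hq := pIdx_le_length hm'
  have ht := sVal_add_sum_take h0 hm'
  have hrot : ((tl ++ [i]).take (pIdx (tl ++ [i]) m - 1)).sum + i
      = ((i :: tl).take (pIdx (tl ++ [i]) m)).sum := by
    conv_rhs => rw [← Nat.sub_add_cancel hq0]
    rw [List.take_append_of_le_length (by simp at hq; omega), List.take_succ_cons,
      List.sum_cons, add_comm]
  have hsplit : ((i :: tl).take (pIdx (tl ++ [i]) m)).sum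
      = ((i :: tl).take (pIdx (i :: tl) m)).sum
        + (((i :: tl).drop (pIdx (i :: tl) m)).take
            (pIdx (tl ++ [i]) m - pIdx (i :: tl) m)).sum := by
    rw [← List.sum_append, ← List.take_add, Nat.add_sub_cancel' (by omega)]
  have := sVal_add_sum_take h0 hm
  have := sum_take_pIdx_eq h0 hm
  have := le_sum_take_pIdx hm
  rw [List.sum_append, List.sum_singleton]
  omega

end ClockTail

lemma e2_nonneg (L : List ℕ) : 0 ≤ e2 L := by
  induction L with
  | nil => exact le_rfl
  | cons x t ih => rw [e2]; positivity

lemma le_e2_cons (x : ℕ) {L : List ℕ} (hL : 0 < L.sum) : (x : ℤ) ≤ e2 (x :: L) := by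
  have hL' : (1 : ℤ) ≤ L.sum := by exact_mod_cast hL
  rw [e2]
  nlinarith [e2_nonneg L]

lemma sum_sub_one_le_e2 {L : List ℕ} (hL : ∀ y ∈ L, 0 < y) (hlen : 2 ≤ L.length) :
    (L.sum : ℤ) - 1 ≤ e2 L := by
  obtain ⟨x, y, L, rfl⟩ : ∃ x y L', L = x :: y :: L' := by
    match L, hlen with
    | x :: y :: L', _ => exact ⟨x, y, L', rfl⟩
  have hx : (1 : ℤ) ≤ x := by exact_mod_cast hL x (by simp)
  have hS : (1 : ℤ) ≤ (y :: L).sum := by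
    exact_mod_cast (List.le_sum_of_mem List.mem_cons_self).trans' (hL y (by simp))
  rw [e2, List.sum_cons, Nat.cast_add]
  nlinarith [e2_nonneg (y :: L)]

lemma add_four_le_e2_cons {x : ℕ} {L : List ℕ} (hx : 0 < x) (hL : ∀ y ∈ L, 0 < y)
    (hlen : 2 ≤ L.length) (hS : 3 ≤ L.sum) : (x : ℤ) + 4 ≤ e2 (x :: L) := by
  have hx' : (1 : ℤ) ≤ x := by exact_mod_cast hx
  have hS' : (3 : ℤ) ≤ L.sum := by exact_mod_cast hS
  rw [e2]
  nlinarith [sum_sub_one_le_e2 hL hlen]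

lemma DI_cons_eq {a b i : ℕ} {tl : List ℕ} (hW : ∀ j ∈ i :: tl, 2 ≤ j)
    (hsum : (i :: tl).sum = a + b + 1)
    (hgt : (ipPart (i :: tl) (b + 1) : ℤ) - sVal (i :: tl) (b + 1) < i) :
    DI a b (i :: tl) = (i : ℝ) - 2 - ((ipPart (i :: tl) (b + 1) : ℝ) - sVal (i :: tl) (b + 1))
      + (e2 ((ipPart (i :: tl) (b + 1) - sVal (i :: tl) (b + 1)) :: clockTail (i :: tl) (b + 1))
        : ℝ) := by
  set l := i :: tl
  have h0 : 0 < b + 1 := b.add_one_pos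
  have hm : b + 1 ≤ l.sum := by omega
  have hs := sVal_add_sum_take h0 hm
  have hp := sum_take_pIdx_eq h0 hm
  have hsp := sVal_le_ipPart h0 hm
  have hs0 := sVal_pos h0 hm
  have hdrop := List.sum_take_add_sum_drop l (pIdx l (b + 1))
  have hdrop' := List.sum_take_add_sum_drop l (pIdx l (b + 1) - 1)
  have hθP : thetaP l 2 = i - 2 := by
    exact_mod_cast thetaP_cons_of_le tl two_pos (hW i List.mem_cons_self)
  have hθM := thetaM_reverse_phi (l := l) (a := a) (r := pIdx l (b + 1))
    (fun j hj => (hW j hj).trans_lt' two_pos) (by omega) (by omega)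
  have hsuffix : (l.drop (pIdx l (b + 1))).sum + ipPart l (b + 1) = a + sVal l (b + 1) := by
    omega
  have hsuffix' : ((l.drop (pIdx l (b + 1))).sum : ℝ) + ipPart l (b + 1) = a + sVal l (b + 1) := by
    exact_mod_cast hsuffix
  rw [DI, DeltaI, show l.headI = i from rfl, if_neg (not_le.2 hgt), hθP, hθM, clockTail]
  linarith

theorem stmt14_general (a b n : ℕ) (hn : n = a + b + 1)
    (I : Composition n) (hW : ∀ i ∈ I.blocks, 2 ≤ i)
    (hgt : (ipPart I.blocks (b + 1) : ℤ) - sVal I.blocks (b + 1) < I.blocks.headI) :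
    (DI a b I.blocks
        = (I.blocks.headI : ℝ) - 2
          - ((ipPart I.blocks (b + 1) : ℝ) - sVal I.blocks (b + 1))
          + (e2 ((ipPart I.blocks (b + 1) - sVal I.blocks (b + 1)) ::
              ((I.blocks.drop (pIdx I.blocks (b + 1))).take
                  (qIdx I.blocks (b + 1) - pIdx I.blocks (b + 1))
                ++ [tVal I.blocks (b + 1)])) : ℝ)) ∧
    (I.blocks.headI : ℝ) - 2 ≤ DI a b I.blocks ∧
    0 ≤ (I.blocks.headI : ℝ) - 2 ∧
    (pIdx I.blocks (b + 1) + 1 ≤ qIdx I.blocks (b + 1) →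
      ((sVal I.blocks (b + 1) = ipPart I.blocks (b + 1) →
          3 ≤ I.blocks.headI ∧
          2 * (I.blocks.headI : ℝ) - 3 ≤ DI a b I.blocks) ∧
       (sVal I.blocks (b + 1) ≠ ipPart I.blocks (b + 1) →
          4 ≤ I.blocks.headI ∧
          (I.blocks.headI : ℝ) + 2 ≤ DI a b I.blocks))) := by
  have hsum : I.blocks.sum = a + b + 1 := hn ▸ I.blocks_sum
  generalize I.blocks = l at hW hgt hsum ⊢
  obtain ⟨i, tl, rfl⟩ := List.exists_cons_of_ne_nil (show l ≠ [] by rintro rfl; simp at hsum)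
  have h0 : 0 < b + 1 := b.add_one_pos
  have hm : b + 1 ≤ (i :: tl).sum := by omega
  have hsp := sVal_le_ipPart h0 hm
  have hD := DI_cons_eq hW hsum hgt
  refine ⟨hD, ?_⟩
  rw [List.headI_cons, hD, ← Nat.cast_sub hsp]
  generalize hx : ipPart (i :: tl) (b + 1) - sVal (i :: tl) (b + 1) = x
  have hxe : (x : ℝ) ≤ (e2 (x :: clockTail (i :: tl) (b + 1)) : ℝ) := by
    exact_mod_cast le_e2_cons x (sum_clockTail_pos h0 hm)
  refine ⟨by linarith, by simpa using hW i List.mem_cons_self, fun hpq => ?_⟩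
  have hL := pos_of_mem_clockTail hW h0 hm
  have hlen := two_le_length_clockTail hm hpq
  have hS := three_le_sum_clockTail hW h0 hm hpq
  have hxS := ipPart_sub_sVal_add_sum_clockTail h0 hm hpq
  rw [hx] at hxS
  refine ⟨fun hs => ⟨by omega, ?_⟩, fun hs => ⟨by omega, ?_⟩⟩
  · obtain rfl : x = 0 := by omega
    have hSi : ((clockTail (i :: tl) (b + 1)).sum : ℤ) = i := by exact_mod_cast (by omega : _ = i)
    have : (2 * i - 3 : ℤ) ≤ i - 2 - 0 + e2 (0 :: clockTail (i :: tl) (b + 1)) := by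
      rw [e2, Nat.cast_zero, zero_mul, zero_add]
      linarith [sum_sub_one_le_e2 hL hlen]
    exact_mod_cast this
  · have : (i + 2 : ℤ) ≤ i - 2 - x + e2 (x :: clockTail (i :: tl) (b + 1)) := by
      linarith [add_four_le_e2_cons (x := x) (by omega) hL hlen hS]
    exact_mod_cast this

/-- For `I ∈ W_>`:
`D_I = i₁ − 2 − (i_p − s) + e₂(i_p − s, i_{p+1}, …, i_q, t) ≥ i₁ − 2 ≥ 0`; and if
moreover `q ≥ p + 1`, then (1) if `|R_I| = a` (i.e. `s = i_p`) then `i₁ ≥ 3` and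
`D_I ≥ 2i₁ − 3`; (2) otherwise `i₁ ≥ 4` and `D_I ≥ i₁ + 2`. -/
theorem stmt14 (a b n : ℕ) (h2 : 2 ≤ b) (hba : b ≤ a) (hn : n = a + b + 1)
    (I : Composition n) (hW : ∀ i ∈ I.blocks, 2 ≤ i)
    (hgt : (ipPart I.blocks (b + 1) : ℤ) - sVal I.blocks (b + 1) < I.blocks.headI) :
    (DI a b I.blocks
        = (I.blocks.headI : ℝ) - 2
          - ((ipPart I.blocks (b + 1) : ℝ) - sVal I.blocks (b + 1))
          + (e2 ((ipPart I.blocks (b + 1) - sVal I.blocks (b + 1)) ::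
              ((I.blocks.drop (pIdx I.blocks (b + 1))).take
                  (qIdx I.blocks (b + 1) - pIdx I.blocks (b + 1))
                ++ [tVal I.blocks (b + 1)])) : ℝ)) ∧
    (I.blocks.headI : ℝ) - 2 ≤ DI a b I.blocks ∧
    0 ≤ (I.blocks.headI : ℝ) - 2 ∧
    (pIdx I.blocks (b + 1) + 1 ≤ qIdx I.blocks (b + 1) →
      ((sVal I.blocks (b + 1) = ipPart I.blocks (b + 1) →
          3 ≤ I.blocks.headI ∧
          2 * (I.blocks.headI : ℝ) - 3 ≤ DI a b I.blocks) ∧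
       (sVal I.blocks (b + 1) ≠ ipPart I.blocks (b + 1) →
          4 ≤ I.blocks.headI ∧
          (I.blocks.headI : ℝ) + 2 ≤ DI a b I.blocks))) :=
  stmt14_general a b n hn I hW hgt
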